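/- Let M be the 4×4 stochastic matrix with rows (a,b,b,c), (d,e,f,cd/a), (d,f,e,cd/a), (a,b,b,c), all entries positive. Then with α = a(a+c−1)/(d(a+c)), the vector v₂ = (α,1,1,α)ᵀ is an eigenvector of M with eigenvalue λ₂ = (a+c)(a−d)/a. -/

import Mathlib

/-!
The matrix commutes with the swap of the two middle states, so it maps vectors of the shape
`(x, y, y, x)` to vectors of the same shape and acts on them through the lumped two-state
matrix `!![a + c, 2b; d + cd/a, e + f]`. By the row sums this is the stochastic matrix
`!![1 - s, s; t, 1 - t]` with `s = 2b` and `t = d(a + c)/a`, whose eigenvector `(-s/t, 1)` for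
the eigenvalue `1 - s - t` lifts to `v₂`.
-/

namespace Matrix

variable {R : Type*} [CommSemiring R]

def mirror (v : Fin 2 → R) : Fin 4 → R := ![v 0, v 1, v 1, v 0]

theorem mirror_smul (r : R) (v : Fin 2 → R) : mirror (r • v) = r • mirror v := by
  ext i; fin_cases i <;> rfl

theorem mulVec_mirror (p q r s t u w : R) (v : Fin 2 → R) :
    !![p, q, q, r; s, t, u, w; s, u, t, w; p, q, q, r] *ᵥ mirror v =
      mirror (!![p + r, 2 * q; s + w, t + u] *ᵥ v) := by
  ext i
  fin_cases i <;>
    simp only [mirror, mulVec, dotProduct, Fin.sum_univ_four, Fin.sum_univ_two, of_apply,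
      Fin.zero_eta, Fin.mk_one, Fin.reduceFinMk, Fin.isValue, cons_val', cons_val_fin_one,
      cons_val_zero, cons_val_one, cons_val] <;>
    ring

theorem two_state_mulVec_eigenvector {K : Type*} [Field K] (s t : K) (ht : t ≠ 0) :
    !![1 - s, s; t, 1 - t] *ᵥ ![-s / t, 1] = (1 - s - t) • ![-s / t, 1] := by
  ext i
  fin_cases i <;>
    simp only [mulVec, dotProduct, Fin.sum_univ_two, of_apply, Fin.zero_eta, Fin.mk_one,
      Fin.isValue, cons_val', cons_val_fin_one, cons_val_zero, cons_val_one, Pi.smul_apply,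
      smul_eq_mul] <;>
    field_simp <;> ring

end Matrix

theorem special_matrix_second_eigenvector_general (a b c d e f : ℝ)
    (ha : 0 < a) (hc : 0 < c) (hd : 0 < d)
    (hrow1 : a + 2 * b + c = 1) (hrow2 : d + e + f + c * d / a = 1)
    (M : Matrix (Fin 4) (Fin 4) ℝ)
    (hM : M = !![a, b, b, c; d, e, f, c * d / a; d, f, e, c * d / a; a, b, b, c])
    (α : ℝ) (hα : α = a * (a + c - 1) / (d * (a + c))) :
    M.mulVec ![α, 1, 1, α] = ((a + c) * (a - d) / a) • ![α, 1, 1, α] := by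
  have h2b : 2 * b = 1 - (a + c) := by linarith
  set t := d + c * d / a
  have ht : t ≠ 0 := by positivity
  have hlumped : !![a + c, 2 * b; d + c * d / a, e + f] = !![1 - 2 * b, 2 * b; t, 1 - t] := by
    rw [show a + c = 1 - 2 * b by linarith, show e + f = 1 - t by linarith]
  have hα_lumped : α = -(2 * b) / t := by
    rw [hα, h2b]; simp only [t]; field_simp; ring
  have heigenvalue : (a + c) * (a - d) / a = 1 - 2 * b - t := by
    rw [h2b]; simp only [t]; field_simp; ring
  have hv : ![α, 1, 1, α] = Matrix.mirror ![-(2 * b) / t, 1] := by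
    rw [hα_lumped]; rfl
  rw [hM, hv, Matrix.mulVec_mirror, hlumped, Matrix.two_state_mulVec_eigenvector _ _ ht,
    heigenvalue, Matrix.mirror_smul]

/-- For the 4×4 stochastic matrix `M` with rows `(a,b,b,c)`, `(d,e,f,cd/a)`,
`(d,f,e,cd/a)`, `(a,b,b,c)` (all entries positive, rows summing to 1) and
`α = a(a+c−1)/(d(a+c))`, the vector `v₂ = (α,1,1,α)ᵀ` is an eigenvector of `M` with
eigenvalue `λ₂ = (a+c)(a−d)/a`. -/
theorem special_matrix_second_eigenvector (a b c d e f : ℝ)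
    (ha : 0 < a) (hb : 0 < b) (hc : 0 < c) (hd : 0 < d) (he : 0 < e) (hf : 0 < f)
    (hrow1 : a + 2 * b + c = 1) (hrow2 : d + e + f + c * d / a = 1)
    (had : a ≠ d)
    (M : Matrix (Fin 4) (Fin 4) ℝ)
    (hM : M = !![a, b, b, c; d, e, f, c * d / a; d, f, e, c * d / a; a, b, b, c])
    (α : ℝ) (hα : α = a * (a + c - 1) / (d * (a + c))) :
    M.mulVec ![α, 1, 1, α] = ((a + c) * (a - d) / a) • ![α, 1, 1, α] :=
  special_matrix_second_eigenvector_general a b c d e f ha hc hd hrow1 hrow2 M hM α hα
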